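/- Let F be an n×m row-stochastic matrix and b > 0. Let ψ*_R minimize the minimax composite risk R(ψ) = max_{i<n}(Σ_j F_{ij}ψ_j + Σ_j F_{nj}(1−ψ_j)) over ψ ∈ [0,1]^m, with R* = R(ψ*_R) < 1. Then the contract b/(1 − R*) · ψ*_R implements action n for every nondecreasing cost vector c with c_n − c_1 ≤ b, and any contract with this robustness property has budget max_j t_j ≥ b/(1 − R*). -/

import Mathlib

/-!
With row sums one, the composite risk of `ψ` against action `i < n` is `1 - gap_i(ψ)`, where
`gap_i(t) = F_n · t - F_i · t` is the extra expected payment of the last action over action `i`.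
A contract is `b`-cost-robust exactly when every gap is at least `b`: the worst cost vector is
`0` on all actions but `b` on the last. Since gaps are linear in `t`, scaling `ψ*` by
`b / (1 - R*)` makes every gap at least `b`; conversely, a robust contract of budget `T`
rescaled by `T⁻¹` lies in the box and has risk at most `1 - b / T`, so `R* ≤ 1 - b / T`.
-/

open Finset

variable {n : ℕ} {ι : Type*} [Fintype ι]

def incentiveGap (F : Fin (n + 1) → ι → ℝ) (t : ι → ℝ) (i : Fin (n + 1)) : ℝ :=
  ∑ j, F (Fin.last n) j * t j - ∑ j, F i j * t j

lemma incentiveGap_smul (F : Fin (n + 1) → ι → ℝ) (a : ℝ) (t : ι → ℝ) (i : Fin (n + 1)) :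
    incentiveGap F (a • t) i = a * incentiveGap F t i := by
  simp only [incentiveGap, Pi.smul_apply, smul_eq_mul, mul_sub, mul_sum, mul_left_comm]

def compositeRisk (F : Fin (n + 1) → ι → ℝ) (hn : 0 < n) (ψ : ι → ℝ) : ℝ :=
  univ.sup' (univ_nonempty_iff.mpr ⟨⟨0, hn⟩⟩)
    fun i : Fin n => ∑ j, F i.castSucc j * ψ j + ∑ j, F (Fin.last n) j * (1 - ψ j)

lemma sum_mul_add_sum_mul_one_sub {p q ψ : ι → ℝ} (hq : ∑ j, q j = 1) :
    ∑ j, p j * ψ j + ∑ j, q j * (1 - ψ j) = 1 - (∑ j, q j * ψ j - ∑ j, p j * ψ j) := by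
  simp only [mul_one_sub, sum_sub_distrib, hq]
  ring

lemma compositeRisk_le_iff {F : Fin (n + 1) → ι → ℝ} (hF : ∑ j, F (Fin.last n) j = 1)
    {hn : 0 < n} {ψ : ι → ℝ} {r : ℝ} :
    compositeRisk F hn ψ ≤ r ↔ ∀ i : Fin n, 1 - r ≤ incentiveGap F ψ i.castSucc := by
  rw [compositeRisk, sup'_le_iff]
  simp only [mem_univ, true_implies, sum_mul_add_sum_mul_one_sub hF, incentiveGap, sub_le_comm]

def IsCostRobust (F : Fin (n + 1) → ι → ℝ) (b : ℝ) (t : ι → ℝ) : Prop :=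
  ∀ c : Fin (n + 1) → ℝ, (∀ i, 0 ≤ c i) → Monotone c → c (Fin.last n) - c 0 ≤ b →
    ∀ i, i ≠ Fin.last n →
      ∑ j, F i j * t j - c i ≤ ∑ j, F (Fin.last n) j * t j - c (Fin.last n)

lemma monotone_ite_eq_last {b : ℝ} (hb : 0 ≤ b) :
    Monotone fun k : Fin (n + 1) => if k = Fin.last n then b else 0 := by
  intro k l hkl
  dsimp only
  split_ifs with hk hl hl
  · exact le_rfl
  · exact absurd (Fin.last_le_iff.mp (hk ▸ hkl)) hl
  · exact hb
  · exact le_rfl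

theorem isCostRobust_iff {F : Fin (n + 1) → ι → ℝ} {b : ℝ} (hb : 0 ≤ b) {t : ι → ℝ} :
    IsCostRobust F b t ↔ ∀ i, i ≠ Fin.last n → b ≤ incentiveGap F t i := by
  refine ⟨fun h i hi => ?_, fun h c _ hc hcb i hi => ?_⟩
  · have hworst := h (fun k => if k = Fin.last n then b else 0)
      (fun k => by split_ifs <;> simp [hb]) (monotone_ite_eq_last hb)
      (by split_ifs <;> simp [hb]) i hi
    simp only [hi, if_true, if_false] at hworst
    rw [incentiveGap]
    linarith
  · have hgap := h i hi
    have hc0 := hc (Fin.zero_le i)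
    rw [incentiveGap] at hgap
    linarith

theorem isCostRobust_smul_of_compositeRisk_le {F : Fin (n + 1) → ι → ℝ}
    (hF : ∑ j, F (Fin.last n) j = 1) {hn : 0 < n} {b r : ℝ} (hb : 0 ≤ b) (hr : r < 1)
    {ψ : ι → ℝ} (hψ : compositeRisk F hn ψ ≤ r) : IsCostRobust F b ((b / (1 - r)) • ψ) := by
  rw [isCostRobust_iff hb]
  intro i hi
  obtain ⟨i, rfl⟩ := Fin.exists_castSucc_eq.mpr hi
  have hr' : 0 < 1 - r := sub_pos.mpr hr
  rw [incentiveGap_smul]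
  calc b = b / (1 - r) * (1 - r) := (div_mul_cancel₀ b hr'.ne').symm
    _ ≤ b / (1 - r) * incentiveGap F ψ i.castSucc :=
      mul_le_mul_of_nonneg_left ((compositeRisk_le_iff hF).mp hψ i) (div_nonneg hb hr'.le)

namespace IsCostRobust

variable {F : Fin (n + 1) → ι → ℝ} {b : ℝ} {t : ι → ℝ}

theorem pos_of_le (h : IsCostRobust F b t) (hn : 0 < n) (hb : 0 < b) (ht : ∀ j, 0 ≤ t j)
    {T : ℝ} (htT : ∀ j, t j ≤ T) : 0 < T := by
  by_contra! hT
  have ht0 : t = 0 := funext fun j => le_antisymm ((htT j).trans hT) (ht j)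
  have hgap := (isCostRobust_iff hb.le).mp h (Fin.castSucc ⟨0, hn⟩) (Fin.castSucc_lt_last _).ne
  simp [ht0, incentiveGap] at hgap
  linarith

theorem compositeRisk_inv_smul_le (h : IsCostRobust F b t) (hF : ∑ j, F (Fin.last n) j = 1)
    (hn : 0 < n) (hb : 0 ≤ b) {T : ℝ} (hT : 0 < T) :
    compositeRisk F hn (T⁻¹ • t) ≤ 1 - b / T := by
  rw [compositeRisk_le_iff hF, sub_sub_cancel]
  intro i
  rw [incentiveGap_smul, inv_mul_eq_div]
  exact div_le_div_of_nonneg_right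
    ((isCostRobust_iff hb).mp h _ (Fin.castSucc_lt_last i).ne) hT.le

end IsCostRobust

theorem cost_robust_min_budget_characterization_general
    (n m : ℕ) (hn : 0 < n) (hm : 0 < m)
    (F : Fin (n + 1) → Fin m → ℝ)
    (hFsum : ∀ i, ∑ j, F i j = 1)
    (b : ℝ) (hb : 0 < b)
    (R : (Fin m → ℝ) → ℝ)
    (hR : ∀ ψ, R ψ = Finset.univ.sup' ⟨(⟨0, hn⟩ : Fin n), Finset.mem_univ _⟩
      (fun i : Fin n =>
        (∑ j, F i.castSucc j * ψ j) + (∑ j, F (Fin.last n) j * (1 - ψ j))))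
    (ψStar : Fin m → ℝ)
    (hψStarMin : ∀ ψ : Fin m → ℝ, (∀ j, 0 ≤ ψ j ∧ ψ j ≤ 1) → R ψStar ≤ R ψ)
    (Rstar : ℝ) (hRstar : Rstar = R ψStar) (hRlt : Rstar < 1)
    (tStar : Fin m → ℝ)
    (htStar : ∀ j, tStar j = b / (1 - Rstar) * ψStar j) :
    (∀ c : Fin (n + 1) → ℝ, (∀ i, 0 ≤ c i) → Monotone c →
      c (Fin.last n) - c 0 ≤ b →
      (∀ i, i ≠ Fin.last n →
        ∑ j, F i j * tStar j - c i ≤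
          ∑ j, F (Fin.last n) j * tStar j - c (Fin.last n))) ∧
    (∀ t : Fin m → ℝ, (∀ j, 0 ≤ t j) →
      (∀ c : Fin (n + 1) → ℝ, (∀ i, 0 ≤ c i) → Monotone c →
        c (Fin.last n) - c 0 ≤ b →
        (∀ i, i ≠ Fin.last n →
          ∑ j, F i j * t j - c i ≤
            ∑ j, F (Fin.last n) j * t j - c (Fin.last n))) →
      b / (1 - Rstar) ≤
        Finset.univ.sup' ⟨(⟨0, hm⟩ : Fin m), Finset.mem_univ _⟩ t) := by
  obtain rfl : R = compositeRisk F hn := funext hR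
  obtain rfl : tStar = (b / (1 - Rstar)) • ψStar := funext htStar
  refine ⟨isCostRobust_smul_of_compositeRisk_le (hFsum _) hb.le hRlt hRstar.ge,
    fun t ht hrob => ?_⟩
  replace hrob : IsCostRobust F b t := hrob
  set T := univ.sup' ⟨⟨0, hm⟩, mem_univ _⟩ t
  have htT : ∀ j, t j ≤ T := fun j => le_sup' t (mem_univ j)
  have hT : 0 < T := hrob.pos_of_le hn hb ht htT
  have hbox : ∀ j, 0 ≤ (T⁻¹ • t) j ∧ (T⁻¹ • t) j ≤ 1 := fun j =>
    ⟨mul_nonneg (inv_nonneg.mpr hT.le) (ht j), inv_mul_le_one_of_le₀ (htT j) hT.le⟩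
  have hRstarT : Rstar ≤ 1 - b / T := hRstar ▸
    (hψStarMin _ hbox).trans (hrob.compositeRisk_inv_smul_le (hFsum _) hn hb.le hT)
  rw [div_le_comm₀ (sub_pos.mpr hRlt) hT]
  linarith

/-- Optimal cost-robust contracts (min-budget case): the sum-optimal
statistical contract `b/(1-R*) · ψ*` is `b`-cost-robust, and any
`b`-cost-robust contract has budget at least `b/(1-R*)`. -/
theorem cost_robust_min_budget_characterization
    (n m : ℕ) (hn : 0 < n) (hm : 0 < m)
    (F : Fin (n + 1) → Fin m → ℝ)
    (hFnonneg : ∀ i j, 0 ≤ F i j)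
    (hFsum : ∀ i, ∑ j, F i j = 1)
    (b : ℝ) (hb : 0 < b)
    (R : (Fin m → ℝ) → ℝ)
    (hR : ∀ ψ, R ψ = Finset.univ.sup' ⟨(⟨0, hn⟩ : Fin n), Finset.mem_univ _⟩
      (fun i : Fin n =>
        (∑ j, F i.castSucc j * ψ j) + (∑ j, F (Fin.last n) j * (1 - ψ j))))
    (ψStar : Fin m → ℝ)
    (hψStarBox : ∀ j, 0 ≤ ψStar j ∧ ψStar j ≤ 1)
    (hψStarMin : ∀ ψ : Fin m → ℝ, (∀ j, 0 ≤ ψ j ∧ ψ j ≤ 1) → R ψStar ≤ R ψ)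
    (Rstar : ℝ) (hRstar : Rstar = R ψStar) (hRlt : Rstar < 1)
    (tStar : Fin m → ℝ)
    (htStar : ∀ j, tStar j = b / (1 - Rstar) * ψStar j) :
    (∀ c : Fin (n + 1) → ℝ, (∀ i, 0 ≤ c i) → Monotone c →
      c (Fin.last n) - c 0 ≤ b →
      (∀ i, i ≠ Fin.last n →
        ∑ j, F i j * tStar j - c i ≤
          ∑ j, F (Fin.last n) j * tStar j - c (Fin.last n))) ∧
    (∀ t : Fin m → ℝ, (∀ j, 0 ≤ t j) →
      (∀ c : Fin (n + 1) → ℝ, (∀ i, 0 ≤ c i) → Monotone c →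
        c (Fin.last n) - c 0 ≤ b →
        (∀ i, i ≠ Fin.last n →
          ∑ j, F i j * t j - c i ≤
            ∑ j, F (Fin.last n) j * t j - c (Fin.last n))) →
      b / (1 - Rstar) ≤
        Finset.univ.sup' ⟨(⟨0, hm⟩ : Fin m), Finset.mem_univ _⟩ t) :=
  cost_robust_min_budget_characterization_general n m hn hm F hFsum b hb R hR ψStar hψStarMin Rstar
    hRstar hRlt tStar htStar
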